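/- arXiv:1906.01826 — 3 statements merged into one kernel-verified Lean document; each statement's English description precedes it below -/
import Mathlib

section
/- Let W : ℝ → ℝ be twice differentiable and strictly positive, let ω : ℝ → ℝ, fix τ₀ ∈ ℝ, and define f : ℝ → ℂ by f(τ) = (2·W(τ))^{−1/2}·exp(i·∫_{τ₀}^{τ} W(s) ds). Then f''(τ) + ω(τ)²·f(τ) = 0 holds for all τ ∈ ℝ if and only if W(τ)² = ω(τ)² − (1/2)·(W''(τ)/W(τ) − (3/2)·(W'(τ)/W(τ))²) holds for all τ ∈ ℝ. -/
/-!
Write `f = A·e^{iθ}` with `A, θ` real; then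
`f'' = (A'' − θ'²A + i(2A'θ' + Aθ''))·e^{iθ}`. For `θ' = W` and `A = (2W)^{-1/2}` the imaginary
part vanishes, since `A²θ' = 1/2` is constant (this is the Wronskian normalization), and
`A''/A = (3/4)(W'/W)² − (1/2)W''/W`. Hence `f'' + ω²f = A·(ω² − W² + A''/A)·e^{iθ}`, and
`A·e^{iθ}` never vanishes.
-/

open Complex

theorem HasDerivAt.mul_exp_I_mul {B : ℝ → ℂ} {θ : ℝ → ℝ} {B' : ℂ} {θ' t : ℝ}
    (hB : HasDerivAt B B' t) (hθ : HasDerivAt θ θ' t) :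
    HasDerivAt (fun s => B s * Complex.exp (I * (θ s : ℂ)))
      ((B' + I * (θ' : ℂ) * B t) * Complex.exp (I * (θ t : ℂ))) t :=
  (hB.mul (hθ.ofReal_comp.const_mul I).cexp).congr_deriv (by ring)

theorem deriv_deriv_ofReal_mul_exp_I_mul {A A' θ θ' : ℝ → ℝ} {A'' θ'' t : ℝ}
    (hA : ∀ s, HasDerivAt A (A' s) s) (hA' : HasDerivAt A' A'' t)
    (hθ : ∀ s, HasDerivAt θ (θ' s) s) (hθ' : HasDerivAt θ' θ'' t) :
    deriv (deriv fun s => (A s : ℂ) * exp (I * (θ s : ℂ))) t =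
      (((A'' - θ' t ^ 2 * A t : ℝ) : ℂ) + I * ((2 * A' t * θ' t + A t * θ'' : ℝ) : ℂ)) *
        exp (I * (θ t : ℂ)) := by
  have hfirst : deriv (fun s => (A s : ℂ) * exp (I * (θ s : ℂ))) =
      fun s => ((A' s : ℂ) + I * θ' s * A s) * exp (I * (θ s : ℂ)) :=
    funext fun s => (HasDerivAt.mul_exp_I_mul (hA s).ofReal_comp (hθ s)).deriv
  have hamplitude : HasDerivAt (fun s => (A' s : ℂ) + I * θ' s * A s)
      (A'' + I * (θ'' * A t + θ' t * A' t)) t :=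
    (hA'.ofReal_comp.add ((hθ'.ofReal_comp.const_mul I).mul (hA t).ofReal_comp)).congr_deriv
      (by ring)
  rw [hfirst, (hamplitude.mul_exp_I_mul (hθ t)).deriv]
  push_cast
  linear_combination (θ' t ^ 2 * A t * exp (I * θ t)) * I_sq

noncomputable def wkbAmplitude (W : ℝ → ℝ) (τ : ℝ) : ℝ :=
  (2 * W τ) ^ (-(1/2) : ℝ)

noncomputable def wkbAnsatz (W : ℝ → ℝ) (τ₀ τ : ℝ) : ℂ :=
  (wkbAmplitude W τ : ℂ) * exp (I * ((∫ s in τ₀..τ, W s : ℝ) : ℂ))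

theorem hasDerivAt_wkbAmplitude {W : ℝ → ℝ} {W' t : ℝ} (hW : HasDerivAt W W' t)
    (hWt : W t ≠ 0) :
    HasDerivAt (wkbAmplitude W) (-(W' / (2 * W t)) * wkbAmplitude W t) t := by
  have h2W : 2 * W t ≠ 0 := mul_ne_zero two_ne_zero hWt
  refine ((hW.const_mul 2).rpow_const (p := -(1/2)) (Or.inl h2W)).congr_deriv ?_
  rw [wkbAmplitude, Real.rpow_sub_one h2W]
  ring

theorem hasDerivAt_deriv_wkbAmplitude {W : ℝ → ℝ} {t : ℝ} (hW : DifferentiableAt ℝ W t)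
    (hW' : DifferentiableAt ℝ (deriv W) t) (hWt : W t ≠ 0) :
    HasDerivAt (fun s => -(deriv W s / (2 * W s)) * wkbAmplitude W s)
      ((3/4 * (deriv W t / W t) ^ 2 - 1/2 * (deriv (deriv W) t / W t)) * wkbAmplitude W t) t := by
  have h2W : 2 * W t ≠ 0 := mul_ne_zero two_ne_zero hWt
  refine ((hW'.hasDerivAt.div (hW.hasDerivAt.const_mul 2) h2W).neg.mul
    (hasDerivAt_wkbAmplitude hW.hasDerivAt hWt)).congr_deriv ?_
  simp only [Pi.neg_apply, Pi.div_apply]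
  field_simp
  ring

theorem deriv_deriv_wkbAnsatz {W : ℝ → ℝ} (τ₀ : ℝ) (hW : Differentiable ℝ W)
    (hW' : Differentiable ℝ (deriv W)) (hW0 : ∀ τ, W τ ≠ 0) (τ : ℝ) :
    deriv (deriv (wkbAnsatz W τ₀)) τ =
      (((3/4 * (deriv W τ / W τ) ^ 2 - 1/2 * (deriv (deriv W) τ / W τ) - W τ ^ 2) *
        wkbAmplitude W τ : ℝ) : ℂ) * exp (I * ((∫ s in τ₀..τ, W s : ℝ) : ℂ)) := by
  have hphase : ∀ s, HasDerivAt (fun u => ∫ x in τ₀..u, W x) (W s) s := fun s =>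
    (hW.continuous.integral_hasStrictDerivAt τ₀ s).hasDerivAt
  unfold wkbAnsatz
  rw [deriv_deriv_ofReal_mul_exp_I_mul
    (fun s => hasDerivAt_wkbAmplitude (hW s).hasDerivAt (hW0 s))
    (hasDerivAt_deriv_wkbAmplitude (hW τ) (hW' τ) (hW0 τ)) hphase (hW τ).hasDerivAt]
  have hWronskian : 2 * (-(deriv W τ / (2 * W τ)) * wkbAmplitude W τ) * W τ
      + wkbAmplitude W τ * deriv W τ = 0 := by
    field_simp [hW0 τ]
    ring
  rw [hWronskian]
  push_cast
  ring

/-- For the WKB ansatz `f(τ) = (2W(τ))^(-1/2)·exp(i ∫_{τ₀}^τ W(s) ds)` with `W` twice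
differentiable and strictly positive, `f` solves the oscillator equation `f'' + ω²·f = 0`
for all `τ` iff `W` solves the nonlinear equation
`W² = ω² − (1/2)·(W''/W − (3/2)·(W'/W)²)` for all `τ`. -/
theorem wkb_equation_iff (W ω : ℝ → ℝ) (τ₀ : ℝ)
    (hWd : Differentiable ℝ W) (hWd2 : Differentiable ℝ (deriv W))
    (hWpos : ∀ τ : ℝ, 0 < W τ)
    (f : ℝ → ℂ)
    (hf : ∀ τ : ℝ, f τ = (((2 * W τ) ^ (-(1/2) : ℝ) : ℝ) : ℂ) *
      Complex.exp (Complex.I * ((∫ s in τ₀..τ, W s : ℝ) : ℂ))) :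
    (∀ τ : ℝ, deriv (deriv f) τ + ((ω τ : ℂ))^2 * f τ = 0) ↔
    (∀ τ : ℝ, (W τ)^2 = (ω τ)^2
      - (1/2) * (deriv (deriv W) τ / W τ - (3/2) * (deriv W τ / W τ)^2)) := by
  obtain rfl : f = wkbAnsatz W τ₀ := funext hf
  refine forall_congr' fun τ => ?_
  have hA : 0 < wkbAmplitude W τ := Real.rpow_pos_of_pos (by linarith [hWpos τ]) _
  have hresidual : deriv (deriv (wkbAnsatz W τ₀)) τ + (ω τ : ℂ) ^ 2 * wkbAnsatz W τ₀ τ =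
      ((wkbAmplitude W τ * ((ω τ) ^ 2
        - (1/2) * (deriv (deriv W) τ / W τ - (3/2) * (deriv W τ / W τ) ^ 2) - W τ ^ 2) : ℝ) : ℂ) *
        exp (I * ((∫ s in τ₀..τ, W s : ℝ) : ℂ)) := by
    rw [deriv_deriv_wkbAnsatz τ₀ hWd hWd2 (fun s => (hWpos s).ne') τ, wkbAnsatz]
    push_cast
    ring
  rw [hresidual, mul_eq_zero, or_iff_left (exp_ne_zero _), ofReal_eq_zero, mul_eq_zero,
    or_iff_right hA.ne', sub_eq_zero, eq_comm]
end

section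
/- Fix j ∈ ℂ and let f : ℝ → ℂ be twice differentiable. With the λ-representation operators (ℓ₁f)(q) = −i·(sin q·f'(q) − j·cos q·f(q)), (ℓ₂f)(q) = −i·(cos q·f'(q) + j·sin q·f(q)), (ℓ₃f)(q) = f'(q), one has the so(3) commutation relations: ℓ₁(ℓ₂f) − ℓ₂(ℓ₁f) = ℓ₃f, ℓ₂(ℓ₃f) − ℓ₃(ℓ₂f) = ℓ₁f, and ℓ₃(ℓ₁f) − ℓ₁(ℓ₃f) = ℓ₂f, pointwise on ℝ. -/
/-- The λ-representation operator `ℓ₁ = −i(sin q·∂_q − j·cos q)`. -/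
noncomputable def ell1 (j : ℂ) (f : ℝ → ℂ) : ℝ → ℂ :=
  fun q => -Complex.I * ((Real.sin q : ℂ) * deriv f q - j * (Real.cos q : ℂ) * f q)

/-- The λ-representation operator `ℓ₂ = −i(cos q·∂_q + j·sin q)`. -/
noncomputable def ell2 (j : ℂ) (f : ℝ → ℂ) : ℝ → ℂ :=
  fun q => -Complex.I * ((Real.cos q : ℂ) * deriv f q + j * (Real.sin q : ℂ) * f q)

/-- The λ-representation operator `ℓ₃ = ∂_q`. -/
noncomputable def ell3 (f : ℝ → ℂ) : ℝ → ℂ :=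
  fun q => deriv f q

lemma sinC (q : ℝ) : HasDerivAt (fun x : ℝ => (Real.sin x : ℂ)) (Real.cos q : ℂ) q :=
  (Real.hasDerivAt_sin q).ofReal_comp

lemma cosC (q : ℝ) : HasDerivAt (fun x : ℝ => (Real.cos x : ℂ)) (-(Real.sin q : ℂ)) q := by
  simpa using (Real.hasDerivAt_cos q).ofReal_comp

/-- The λ-representation operators of `so(3)` satisfy the commutation relations
`[ℓ₁, ℓ₂] = ℓ₃`, `[ℓ₂, ℓ₃] = ℓ₁`, `[ℓ₃, ℓ₁] = ℓ₂` pointwise on twice differentiable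
functions. -/
theorem so3_lambda_representation_commutators (j : ℂ) (f : ℝ → ℂ)
    (hf : Differentiable ℝ f) (hf' : Differentiable ℝ (deriv f)) (q : ℝ) :
    ell1 j (ell2 j f) q - ell2 j (ell1 j f) q = ell3 f q ∧
    ell2 j (ell3 f) q - ell3 (ell2 j f) q = ell1 j f q ∧
    ell3 (ell1 j f) q - ell1 j (ell3 f) q = ell2 j f q := by
  have hfq : HasDerivAt f (deriv f q) q := (hf q).hasDerivAt
  have hfq' : HasDerivAt (deriv f) (deriv (deriv f) q) q := (hf' q).hasDerivAt
  have h1 : HasDerivAt (ell1 j f)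
      (-Complex.I * (((Real.cos q : ℂ) * deriv f q + (Real.sin q : ℂ) * deriv (deriv f) q)
        - (j * (-(Real.sin q : ℂ)) * f q + j * (Real.cos q : ℂ) * deriv f q))) q := by
    exact (((sinC q).mul hfq').sub (((cosC q).const_mul j).mul hfq)).const_mul (-Complex.I)
  have h2 : HasDerivAt (ell2 j f)
      (-Complex.I * (((-(Real.sin q : ℂ)) * deriv f q + (Real.cos q : ℂ) * deriv (deriv f) q)
        + (j * (Real.cos q : ℂ) * f q + j * (Real.sin q : ℂ) * deriv f q))) q := by
    exact (((cosC q).mul hfq').add (((sinC q).const_mul j).mul hfq)).const_mul (-Complex.I)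
  have e1 := h1.deriv
  have e2 := h2.deriv
  have pyth : ((Real.sin q : ℂ))^2 + ((Real.cos q : ℂ))^2 = 1 := by
    norm_cast; exact Real.sin_sq_add_cos_sq q
  refine ⟨?_, ?_, ?_⟩
  · simp only [ell1, ell2, ell3, e1, e2]
    linear_combination (-Complex.I^2 * deriv f q) * pyth + (-(deriv f q)) * Complex.I_sq
  · simp only [ell1, ell2, ell3, e2, show ell3 f = deriv f from rfl]
    ring
  · simp only [ell1, ell2, ell3, e1, show ell3 f = deriv f from rfl]
    ring
end

section
/- Fix j ∈ ℂ and let f : ℝ → ℂ be twice differentiable. With the λ-representation operators (ℓ₁f)(q) = −i·(sin q·f'(q) − j·cos q·f(q)), (ℓ₂f)(q) = −i·(cos q·f'(q) + j·sin q·f(q)), (ℓ₃f)(q) = f'(q), the Casimir operator acts as a scalar: ℓ₁(ℓ₁f) + ℓ₂(ℓ₂f) + ℓ₃(ℓ₃f) = −j·(j+1)·f, pointwise on ℝ. -/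
open Complex

lemma hasDerivAt_ofReal_sin (q : ℝ) :
    HasDerivAt (fun x : ℝ => (Real.sin x : ℂ)) (Real.cos q) q :=
  (Real.hasDerivAt_sin q).ofReal_comp

lemma hasDerivAt_ofReal_cos (q : ℝ) :
    HasDerivAt (fun x : ℝ => (Real.cos x : ℂ)) (-Real.sin q) q := by
  simpa using (Real.hasDerivAt_cos q).ofReal_comp

section

variable {j : ℂ} {f : ℝ → ℂ} {q : ℝ}

lemma hasDerivAt_ell1 (hf : DifferentiableAt ℝ f q) (hf' : DifferentiableAt ℝ (deriv f) q) :
    HasDerivAt (ell1 j f)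
      (-I * (Real.cos q * deriv f q + Real.sin q * deriv (deriv f) q
        + j * Real.sin q * f q - j * Real.cos q * deriv f q)) q :=
  ((((hasDerivAt_ofReal_sin q).mul hf'.hasDerivAt).sub
    (((hasDerivAt_ofReal_cos q).const_mul j).mul hf.hasDerivAt)).const_mul (-I)).congr_deriv
      (by ring)

lemma hasDerivAt_ell2 (hf : DifferentiableAt ℝ f q) (hf' : DifferentiableAt ℝ (deriv f) q) :
    HasDerivAt (ell2 j f)
      (-I * (-Real.sin q * deriv f q + Real.cos q * deriv (deriv f) q
        + j * Real.cos q * f q + j * Real.sin q * deriv f q)) q :=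
  ((((hasDerivAt_ofReal_cos q).mul hf'.hasDerivAt).add
    (((hasDerivAt_ofReal_sin q).const_mul j).mul hf.hasDerivAt)).const_mul (-I)).congr_deriv
      (by ring)

end

/-- The Casimir operator of the λ-representation of `so(3)` acts as the scalar
`−j(j+1)`: for twice differentiable `f`, `ℓ₁²f + ℓ₂²f + ℓ₃²f = −j(j+1)·f` pointwise. -/
theorem so3_lambda_representation_casimir (j : ℂ) (f : ℝ → ℂ)
    (hf : Differentiable ℝ f) (hf' : Differentiable ℝ (deriv f)) (q : ℝ) :
    ell1 j (ell1 j f) q + ell2 j (ell2 j f) q + ell3 (ell3 f) q = -j * (j + 1) * f q := by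
  have h₁ := (hasDerivAt_ell1 (j := j) (hf q) (hf' q)).deriv
  have h₂ := (hasDerivAt_ell2 (j := j) (hf q) (hf' q)).deriv
  have hsc : (Real.sin q : ℂ) ^ 2 + (Real.cos q : ℂ) ^ 2 = 1 := by
    exact_mod_cast Real.sin_sq_add_cos_sq q
  have h₃ : ell3 (ell3 f) q = deriv (deriv f) q := rfl
  rw [h₃]
  simp only [ell1, ell2] at h₁ h₂ ⊢
  rw [h₁, h₂]
  linear_combination (deriv (deriv f) q + j * f q + j ^ 2 * f q) *
    (((Real.sin q : ℂ) ^ 2 + (Real.cos q : ℂ) ^ 2) * I_sq - hsc)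
end
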